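/- Uniqueness of highest weight element in type A: if x = (x₁, …, x_k, 0, 0, …) ∈ R(λ) satisfies ẽ_l x = 0 for all l ∈ I, then x = r_λ = (∅₁^{m₁}, …, ∅_n^{m_n}, 0, …). -/

import Mathlib

attribute [local instance] Classical.propDecidable

noncomputable section

namespace CrystalSeq

/-- an element of `𝓡^∞`: the (finite) list of its non-zero components, each component
recorded together with its superscript `i` (so `(i, L)` stands for an element of `⋃ₛ R^i_s`). -/
abbrev RSeq := List (ℤ × List (ℤ × ℤ))

def firsts (L : List (ℤ × ℤ)) : List ℤ := L.map Prod.fst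
def seconds (L : List (ℤ × ℤ)) : List ℤ := L.map Prod.snd

/-- `L ∈ ⋃ₛ R^i_s`.  Entries are encoded as integers: `v` with `1 ≤ v ≤ n` is the letter `v`,
and (in type `C`) `v` with `n < v ≤ 2n-1` is the barred letter `bar (2n - v)`, so that the
bar map is `v ↦ 2n - v` and `max I = 2n - 1`.  The flag is `t = true` for type `Cₙ` and
`t = false` for type `Aₙ` (where `max I = n` and there are no barred letters).
The conditions are `1 ≤ i_s < ⋯ < i₁ ≤ i ≤ i₁' < ⋯ < i_s' ≤ max I` and `i_j' ≤ bar i_j`. -/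
def InR (t : Bool) (n : ℕ) (i : ℤ) (L : List (ℤ × ℤ)) : Prop :=
  List.Chain' (fun p q => q.1 < p.1 ∧ p.2 < q.2) L ∧
  ∀ p ∈ L, 1 ≤ p.1 ∧ p.1 ≤ i ∧ i ≤ p.2 ∧
    p.2 ≤ (if t then 2 * (n : ℤ) - 1 else (n : ℤ)) ∧
    (t = true → p.2 ≤ 2 * (n : ℤ) - p.1)

/-- property (a) of Section 3 -/
def condA (t : Bool) (n : ℕ) (i l : ℤ) (L : List (ℤ × ℤ)) : Prop :=
  l ∉ firsts L ∧ l ∉ seconds L ∧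
  (l < i → l + 1 ∈ firsts L) ∧ (i < l → l - 1 ∈ seconds L) ∧
  (t = true → (2 * (n : ℤ) - l - 1 ∈ seconds L ∨ 2 * (n : ℤ) - l ∉ seconds L))

/-- property (a') of Section 3 (only meaningful in type `C`) -/
def condA' (t : Bool) (n : ℕ) (i l : ℤ) (L : List (ℤ × ℤ)) : Prop :=
  t = true ∧ l ∉ firsts L ∧ l ∉ seconds L ∧
  (l < i → l + 1 ∈ firsts L) ∧ (i < l → l - 1 ∈ seconds L) ∧
  (2 * (n : ℤ) - l - 1 ∈ seconds L ∧ 2 * (n : ℤ) - l ∉ seconds L)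

/-- property (b) of Section 3 -/
def condB (t : Bool) (n : ℕ) (i l : ℤ) (L : List (ℤ × ℤ)) : Prop :=
  t = true ∧ 2 * (n : ℤ) - l ∉ seconds L ∧ 2 * (n : ℤ) - l - 1 ∈ seconds L ∧
  (l < i → (l + 1 ∉ firsts L ∨ l ∈ firsts L)) ∧
  (i < l → (l - 1 ∉ seconds L ∨ l ∈ seconds L)) ∧
  (l = i → ∃ p, L.head? = some p ∧ (p.1 = l ∨ p.2 = l))

/-- property (c) of Section 3 -/
def condC (t : Bool) (n : ℕ) (i l : ℤ) (L : List (ℤ × ℤ)) : Prop :=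
  (l ∈ firsts L ∨ l ∈ seconds L) ∧
  (l < i → l + 1 ∉ firsts L) ∧ (i < l → l - 1 ∉ seconds L) ∧
  (l = i → L.head? = some (l, l)) ∧
  (t = true → (2 * (n : ℤ) - l - 1 ∈ seconds L ∨ 2 * (n : ℤ) - l ∉ seconds L))

/-- property (d) of Section 3 (only meaningful in type `C`) -/
def condD (t : Bool) (n : ℕ) (i l : ℤ) (L : List (ℤ × ℤ)) : Prop :=
  t = true ∧ 2 * (n : ℤ) - l ∈ seconds L ∧ 2 * (n : ℤ) - l - 1 ∉ seconds L ∧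
  (l < i → (l + 1 ∉ firsts L ∨ l ∈ firsts L)) ∧
  (i < l → (l - 1 ∉ seconds L ∨ l ∈ seconds L)) ∧
  (l = i → ∃ p, L.head? = some p ∧ (p.1 = l ∨ p.2 = l))

/-- property (d') of Section 3: (d) with every `∨` replaced by `∧` -/
def condD' (t : Bool) (n : ℕ) (i l : ℤ) (L : List (ℤ × ℤ)) : Prop :=
  t = true ∧ 2 * (n : ℤ) - l ∈ seconds L ∧ 2 * (n : ℤ) - l - 1 ∉ seconds L ∧
  (l < i → (l + 1 ∉ firsts L ∧ l ∈ firsts L)) ∧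
  (i < l → (l - 1 ∉ seconds L ∧ l ∈ seconds L)) ∧
  (l = i → ∃ p, L.head? = some p ∧ p.1 = l ∧ p.2 = l)

/-- the raw modification underlying `θ_l` in case (a): replace `l+1` by `l` (if `l < i`),
replace `l-1` by `l` (if `l > i`), or add the pair `(l,l)` (if `l = i`). -/
def thetaRaw (i l : ℤ) (L : List (ℤ × ℤ)) : List (ℤ × ℤ) :=
  if l < i then L.map (fun p => if p.1 = l + 1 then (l, p.2) else p)
  else if i < l then L.map (fun p => if p.2 = l - 1 then (p.1, l) else p)
  else (l, l) :: L

/-- replace `bar (l+1)` by `bar l` (case (b) of `θ_l`) -/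
def barUp (n : ℕ) (l : ℤ) (L : List (ℤ × ℤ)) : List (ℤ × ℤ) :=
  L.map (fun p => if p.2 = 2 * (n : ℤ) - l - 1 then (p.1, 2 * (n : ℤ) - l) else p)

/-- the map `θ_l : ⋃ₛ R^i_s → ⋃ₛ R^i_s ∪ {0}` -/
def theta (t : Bool) (n : ℕ) (i l : ℤ) (L : List (ℤ × ℤ)) : Option (List (ℤ × ℤ)) :=
  if condA t n i l L then some (thetaRaw i l L)
  else if condB t n i l L then some (barUp n l L)
  else none

/-- the raw modification underlying `ρ_l` in case (c): replace `l` by `l+1` (if `l < i`),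
replace `l` by `l-1` (if `l > i`), or erase the pair `(l,l)` (if `l = i`). -/
def rhoRaw (i l : ℤ) (L : List (ℤ × ℤ)) : List (ℤ × ℤ) :=
  if l < i then L.map (fun p => if p.1 = l then (l + 1, p.2) else p)
  else if i < l then L.map (fun p => if p.2 = l then (p.1, l - 1) else p)
  else L.erase (l, l)

/-- replace `bar l` by `bar (l+1)` (case (d) of `ρ_l`) -/
def barDown (n : ℕ) (l : ℤ) (L : List (ℤ × ℤ)) : List (ℤ × ℤ) :=
  L.map (fun p => if p.2 = 2 * (n : ℤ) - l then (p.1, 2 * (n : ℤ) - l - 1) else p)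

/-- the map `ρ_l : ⋃ₛ R^i_s → ⋃ₛ R^i_s ∪ {0}` -/
def rho (t : Bool) (n : ℕ) (i l : ℤ) (L : List (ℤ × ℤ)) : Option (List (ℤ × ℤ)) :=
  if condC t n i l L then some (rhoRaw i l L)
  else if condD t n i l L then some (barDown n l L)
  else none

/-- validity of an element of `𝓡^∞` -/
def ValidR (t : Bool) (n : ℕ) (c : RSeq) : Prop :=
  ∀ q ∈ c, 1 ≤ q.1 ∧ q.1 ≤ (n : ℤ) ∧ InR t n q.1 q.2

/-- `σ^j_l = a^j_l + b^j_l` -/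
def sigmaStat (t : Bool) (n : ℕ) (l : ℤ) (c : RSeq) (j : ℕ) : ℕ :=
  (c.take (j - 1)).countP (fun q => decide (condA t n q.1 l q.2 ∨ condB t n q.1 l q.2)) +
  (c.take (j - 1)).countP (fun q => decide (condA' t n q.1 l q.2))

/-- `τ^j_l = c^j_l + d^j_l` -/
def tauStat (t : Bool) (n : ℕ) (l : ℤ) (c : RSeq) (j : ℕ) : ℕ :=
  ((c.take j).drop 1).countP (fun q => decide (condC t n q.1 l q.2 ∨ condD t n q.1 l q.2)) +
  ((c.take j).drop 1).countP (fun q => decide (condD' t n q.1 l q.2))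

/-- `σ^j_l - τ^j_l` -/
def dstat (t : Bool) (n : ℕ) (l : ℤ) (c : RSeq) (j : ℕ) : ℤ :=
  (sigmaStat t n l c j : ℤ) - (tauStat t n l c j : ℤ)

/-- `min {σ^j_l - τ^j_l | 1 ≤ j ≤ k}` -/
def minStat (t : Bool) (n : ℕ) (l : ℤ) (c : RSeq) : ℤ :=
  ((List.range c.length).map (fun j => dstat t n l c (j + 1))).foldr min (dstat t n l c 1)

/-- `f_l(x)`: the largest position attaining the minimum of `σ^j_l - τ^j_l` -/
def fpos (t : Bool) (n : ℕ) (l : ℤ) (c : RSeq) : ℕ :=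
  sSup {p : ℕ | 1 ≤ p ∧ p ≤ c.length ∧ dstat t n l c p = minStat t n l c}

/-- `e_l(x)`: the smallest position attaining the minimum of `σ^j_l - τ^j_l` -/
def epos (t : Bool) (n : ℕ) (l : ℤ) (c : RSeq) : ℕ :=
  sInf {p : ℕ | 1 ≤ p ∧ p ≤ c.length ∧ dstat t n l c p = minStat t n l c}

/-- the Kashiwara operator `f̃_l` on `𝓡^∞`: apply `θ_l` at position `f_l(x)` -/
def ftil (t : Bool) (n : ℕ) (l : ℤ) (c : RSeq) : Option RSeq :=
  (GetElem?.getElem? c (fpos t n l c - 1)).bind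
    (fun q => (theta t n q.1 l q.2).map (fun y => c.set (fpos t n l c - 1) (q.1, y)))

/-- the Kashiwara operator `ẽ_l` on `𝓡^∞`: apply `ρ_l` at position `e_l(x)` -/
def etil (t : Bool) (n : ℕ) (l : ℤ) (c : RSeq) : Option RSeq :=
  (GetElem?.getElem? c (epos t n l c - 1)).bind
    (fun q => (rho t n q.1 l q.2).map (fun y => c.set (epos t n l c - 1) (q.1, y)))

/-- the Cartan matrix entry `⟨α_a^∨, α_b⟩` of type `Aₙ` (`t = false`) or `Cₙ` (`t = true`) -/
def cartan (t : Bool) (n : ℕ) (a b : ℤ) : ℤ :=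
  if a = b then 2
  else if b = a + 1 then (if t = true ∧ b = (n : ℤ) then -2 else -1)
  else if b = a - 1 then -1 else 0

/-- the coefficient of `ω_m` in the positive root `α_{a,b}` (here `b > n` encodes the
barred letter `bar (2n - b)`, so `α_{a, bar j} = α_a + ⋯ + α_n + α_{n-1} + ⋯ + α_j`). -/
def rootCoeff (t : Bool) (n : ℕ) (a b m : ℤ) : ℤ :=
  (∑ x ∈ Finset.Icc a (min b (n : ℤ)), cartan t n m x) +
  (if (n : ℤ) < b then ∑ x ∈ Finset.Icc (2 * (n : ℤ) - b) ((n : ℤ) - 1), cartan t n m x else 0)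

/-- the coefficient of `ω_m` in the weight of a component `(i, L)`:
`ω_i - ∑_j α_{i_j, i_j'}` -/
def wtComp (t : Bool) (n : ℕ) (q : ℤ × List (ℤ × ℤ)) (m : ℤ) : ℤ :=
  (if m = q.1 then 1 else 0) - ((q.2.map (fun p => rootCoeff t n p.1 p.2 m)).sum)

/-- the coefficient of `ω_m` in `wt(x)` for `x ∈ 𝓡^∞` -/
def wtR (t : Bool) (n : ℕ) (c : RSeq) (m : ℤ) : ℤ :=
  (c.map (fun q => wtComp t n q m)).sum

/-- `ε_l(x) = τ²_l((∅₁, x_{q₁}, 0, …)) - min_j (σ^j_l - τ^j_l)` -/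
def epsStat (t : Bool) (n : ℕ) (l : ℤ) (c : RSeq) : ℤ :=
  (tauStat t n l (((1 : ℤ), ([] : List (ℤ × ℤ))) :: c) 2 : ℤ) - minStat t n l c

/-- `φ_l(x) = σ^{k+1}_l(x) - τ^k_l(x) - min_j (σ^j_l - τ^j_l)` -/
def phiStat (t : Bool) (n : ℕ) (l : ℤ) (c : RSeq) : ℤ :=
  (sigmaStat t n l c (c.length + 1) : ℤ) - (tauStat t n l c c.length : ℤ) - minStat t n l c

/-- iterates of `ẽ_l` -/
def eIter (t : Bool) (n : ℕ) (l : ℤ) (k : ℕ) (c : RSeq) : Option RSeq :=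
  (fun o => o.bind (etil t n l))^[k] (some c)

/-- iterates of `f̃_l` -/
def fIter (t : Bool) (n : ℕ) (l : ℤ) (k : ℕ) (c : RSeq) : Option RSeq :=
  (fun o => o.bind (ftil t n l))^[k] (some c)

/-- one Kashiwara step (in either direction); connected components of `𝓡^∞` are the
equivalence classes of the reflexive-transitive closure of this relation. -/
def KStep (t : Bool) (n : ℕ) (c c' : RSeq) : Prop :=
  ∃ l : ℤ, 1 ≤ l ∧ l ≤ (n : ℤ) ∧ (ftil t n l c = some c' ∨ etil t n l c = some c')

/-- the list `1^{m_1} 2^{m_2} ⋯ n^{m_n}` of superscripts of `r_λ` for `λ = ∑ m_i ω_i` -/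
def typeList (n : ℕ) (m : ℤ → ℕ) : List ℤ :=
  (List.range n).flatMap (fun a => List.replicate (m ((a : ℤ) + 1)) ((a : ℤ) + 1))

/-- the highest weight element `r_λ = (∅₁^{m₁}, …, ∅ₙ^{mₙ}, 0, …)` -/
def rlam (n : ℕ) (m : ℤ → ℕ) : RSeq := (typeList n m).map (fun i => (i, []))

/-- `𝓡(λ)`: the connected component of `𝓡^∞` containing `r_λ` -/
def Rlam (t : Bool) (n : ℕ) (m : ℤ → ℕ) (c : RSeq) : Prop :=
  Relation.ReflTransGen (KStep t n) (rlam n m) c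

/-- the `k`-th first entry `i_k` (1-based), as an `Option` -/
def fIdx (L : List (ℤ × ℤ)) (k : ℤ) : Option ℤ :=
  if 1 ≤ k then (L[k.toNat - 1]?).map Prod.fst else none

/-- the `k`-th second entry `i'_k` (1-based), as an `Option` -/
def sIdx (L : List (ℤ × ℤ)) (k : ℤ) : Option ℤ :=
  if 1 ≤ k then (L[k.toNat - 1]?).map Prod.snd else none

/-- conditions (1) i)–iii) on an adjacent pair `(x_q, x_{q+1})`,
`x_q = (i₁,i₁')⋯(i_s,i_s') ∈ R^i_s`, `x_{q+1} = (j₁,j₁')⋯(j_t,j_t') ∈ R^j_t`. -/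
def cond1 (i : ℤ) (L1 : List (ℤ × ℤ)) (j : ℤ) (L2 : List (ℤ × ℤ)) : Prop :=
  -- i) `#{i_k | 1 ≤ i_k ≤ j_{t-p}} ≥ p+1` for `0 ≤ p ≤ u = max{0 ≤ r ≤ t-1 | j_{t-r} ≤ i}`
  (∀ p : ℕ, (p : ℤ) ≤ (L2.length : ℤ) - 1 →
    ∀ jv, fIdx L2 ((L2.length : ℤ) - p) = some jv → jv ≤ i →
      ((p : ℤ) + 1 ≤ (L1.countP (fun q => decide (1 ≤ q.1 ∧ q.1 ≤ jv)) : ℤ))) ∧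
  -- ii) `j_{t-p} ≤ i'_{j_{t-p} - p + s - i}` for `p ∈ {u+1 ≤ r ≤ t-1 | j_{t-r} ≤ r + i}`
  (∀ p : ℕ, (p : ℤ) ≤ (L2.length : ℤ) - 1 →
    ∀ jv, fIdx L2 ((L2.length : ℤ) - p) = some jv → i < jv → jv ≤ (p : ℤ) + i →
      ∃ v, sIdx L1 (jv - p + L1.length - i) = some v ∧ jv ≤ v) ∧
  -- iii) `j'_p ≤ i'_{j - i + s - t + p}` for `1 ≤ p ≤ i - j + t`
  (∀ p : ℕ, 1 ≤ p → (p : ℤ) ≤ i - j + L2.length →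
    ∀ jv, sIdx L2 p = some jv →
      ∃ v, sIdx L1 (j - i + L1.length - L2.length + p) = some v ∧ jv ≤ v)

/-- condition (2): there is no pair `(∅_i, x_{q+1} ≠ ∅_j)` with `i ≥ j_t` -/
def cond2 (i : ℤ) (L1 : List (ℤ × ℤ)) (L2 : List (ℤ × ℤ)) : Prop :=
  L1 = [] → ∀ p, L2.getLast? = some p → i < p.1

/-- an adjacent pair satisfying the type `A` conditions (1) and (2) -/
def pairOkA (i : ℤ) (L1 : List (ℤ × ℤ)) (j : ℤ) (L2 : List (ℤ × ℤ)) : Prop :=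
  (L1 ≠ [] → L2 ≠ [] → cond1 i L1 j L2) ∧ cond2 i L1 L2

/-- the exclusion condition `bar v - δ ∉ (1-δ)·{firsts} ∪ δ·(I ∖ {seconds})`
of conditions (3)(a),(b) and (4)(a),(b), where `δ = δ_{bar v ∈ {i+1,…,n}}`. -/
def excl (n : ℕ) (i : ℤ) (L : List (ℤ × ℤ)) (v : ℤ) : Prop :=
  ((i < 2 * (n : ℤ) - v ∧ 2 * (n : ℤ) - v ≤ (n : ℤ)) →
    ((1 ≤ 2 * (n : ℤ) - v - 1 ∧ 2 * (n : ℤ) - v - 1 ≤ 2 * (n : ℤ) - 1) →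
      2 * (n : ℤ) - v - 1 ∈ seconds L)) ∧
  (¬(i < 2 * (n : ℤ) - v ∧ 2 * (n : ℤ) - v ≤ (n : ℤ)) → 2 * (n : ℤ) - v ∉ firsts L)

/-- the forbidden configuration of condition (3) of Theorem `char2` -/
def cond3 (n : ℕ) (i : ℤ) (L1 : List (ℤ × ℤ)) (j : ℤ) (L2 : List (ℤ × ℤ)) : Prop :=
  ∃ p r : ℕ, 1 ≤ r ∧ r ≤ p ∧ p ≤ L1.length ∧
    ∃ vp vr : ℤ, sIdx L1 (p : ℤ) = some vp ∧ sIdx L1 (r : ℤ) = some vr ∧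
      (n : ℤ) ≤ vr ∧ vr ≤ vp ∧
      excl n i L1 vr ∧ excl n j L2 vp ∧
      ((p : ℤ) - (r : ℤ)
        + (L2.countP (fun q => decide (q.1 < 2 * (n : ℤ) - vp)) : ℤ)
        - (L1.countP (fun q => decide (q.1 < 2 * (n : ℤ) - vr)) : ℤ)
        + (L1.countP (fun q => decide (q.2 < 2 * (n : ℤ) - vr)) : ℤ)
        - (L2.countP (fun q => decide (q.2 < 2 * (n : ℤ) - vp)) : ℤ)
        ≥ max 0 (2 * (n : ℤ) - vr - i) - max 0 (2 * (n : ℤ) - vp - j))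

/-- the forbidden configuration of condition (4) of Theorem `char2` -/
def cond4 (n : ℕ) (i : ℤ) (L1 : List (ℤ × ℤ)) (j : ℤ) (L2 : List (ℤ × ℤ)) : Prop :=
  ∃ p r : ℕ, 1 ≤ p ∧ p ≤ L1.length ∧ 1 ≤ r ∧ r ≤ L2.length ∧
    ∃ vp vr : ℤ, sIdx L1 (p : ℤ) = some vp ∧ sIdx L2 (r : ℤ) = some vr ∧
      (n : ℤ) ≤ vr ∧ vr ≤ vp ∧
      excl n j L2 vp ∧ excl n j L2 vr ∧
      ((i - j) + ((L2.length : ℤ) - (L1.length : ℤ)) + ((p : ℤ) - (r : ℤ))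
        + (L2.countP (fun q => decide (2 * (n : ℤ) - vp ≤ q.2 ∧ q.2 < 2 * (n : ℤ) - vr)) : ℤ)
        - (L2.countP (fun q => decide (2 * (n : ℤ) - vp ≤ q.1 ∧ q.1 < 2 * (n : ℤ) - vr)) : ℤ)
        ≥ max 0 (2 * (n : ℤ) - vr - j) - max 0 (2 * (n : ℤ) - vp - j))

/-- an adjacent pair satisfying the type `C` conditions (1)–(4) -/
def pairOkC (n : ℕ) (i : ℤ) (L1 : List (ℤ × ℤ)) (j : ℤ) (L2 : List (ℤ × ℤ)) : Prop :=
  pairOkA i L1 j L2 ∧ (L1 ≠ [] → ¬ cond3 n i L1 j L2) ∧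
  (L1 ≠ [] → L2 ≠ [] → ¬ cond4 n i L1 j L2)

/-- the explicit description of `𝓡(λ)` in type `Aₙ` (Theorem `char`) -/
def MemA (n : ℕ) (m : ℤ → ℕ) (c : RSeq) : Prop :=
  c.map Prod.fst = typeList n m ∧ ValidR false n c ∧
  List.Chain' (fun a b => pairOkA a.1 a.2 b.1 b.2) c

/-- the explicit description of `𝓡(λ)` in type `Cₙ` (Theorem `char2`) -/
def MemC (n : ℕ) (m : ℤ → ℕ) (c : RSeq) : Prop :=
  c.map Prod.fst = typeList n m ∧ ValidR true n c ∧
  List.Chain' (fun a b => pairOkC n a.1 a.2 b.1 b.2) c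

/-- `f̃_l` on a single component -/
def fC (t : Bool) (n : ℕ) (l : ℤ) (q : ℤ × List (ℤ × ℤ)) : Option (ℤ × List (ℤ × ℤ)) :=
  (theta t n q.1 l q.2).map (fun y => (q.1, y))

/-- `ẽ_l` on a single component -/
def eC (t : Bool) (n : ℕ) (l : ℤ) (q : ℤ × List (ℤ × ℤ)) : Option (ℤ × List (ℤ × ℤ)) :=
  (rho t n q.1 l q.2).map (fun y => (q.1, y))

/-- `f̃_l` on a tensor product `𝓡' ⊗ (single component)` (tensor product rule) -/
def tensF (t : Bool) (n : ℕ) (l : ℤ) (b : RSeq × (ℤ × List (ℤ × ℤ))) :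
    Option (RSeq × (ℤ × List (ℤ × ℤ))) :=
  if epsStat t n l [b.2] < phiStat t n l b.1 then (ftil t n l b.1).map (fun y => (y, b.2))
  else (fC t n l b.2).map (fun y => (b.1, y))

/-- `ẽ_l` on a tensor product `𝓡' ⊗ (single component)` (tensor product rule) -/
def tensE (t : Bool) (n : ℕ) (l : ℤ) (b : RSeq × (ℤ × List (ℤ × ℤ))) :
    Option (RSeq × (ℤ × List (ℤ × ℤ))) :=
  if epsStat t n l [b.2] ≤ phiStat t n l b.1 then (etil t n l b.1).map (fun y => (y, b.2))
  else (eC t n l b.2).map (fun y => (b.1, y))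

/-- `φ_l` of the tensor product -/
def tensPhi (t : Bool) (n : ℕ) (l : ℤ) (b : RSeq × (ℤ × List (ℤ × ℤ))) : ℤ :=
  max (phiStat t n l [b.2]) (phiStat t n l b.1 + phiStat t n l [b.2] - epsStat t n l [b.2])

/-- `ε_l` of the tensor product -/
def tensEps (t : Bool) (n : ℕ) (l : ℤ) (b : RSeq × (ℤ × List (ℤ × ℤ))) : ℤ :=
  max (epsStat t n l b.1) (epsStat t n l b.1 + epsStat t n l [b.2] - phiStat t n l b.1)

/-- the map `η : 𝓡(ω_i) → 𝓡(ω_{i-1}) ⊗ 𝓡(ω_1)` of Theorem 6.1 (type `Cₙ`) -/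
def eta (i : ℤ) (L : List (ℤ × ℤ)) : List (ℤ × ℤ) × List (ℤ × ℤ) :=
  match L with
  | [] => ([], [(1, i - 1)])
  | (a, b) :: rest =>
      ((if a = i then [] else [(a, i - 1)]) ++ (rest.map Prod.fst).zip (b :: rest.map Prod.snd),
       [(1, (rest.getLastD (a, b)).2)])

/-- `η` viewed as landing in the tensor product of crystals of tuples -/
def etaT (i : ℤ) (L : List (ℤ × ℤ)) : RSeq × (ℤ × List (ℤ × ℤ)) :=
  ([(i - 1, (eta i L).1)], (1, (eta i L).2))

end CrystalSeq

/-!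
Every component of a highest weight element `x` is empty. Suppose `x_r = (i, L)` is the first
nonempty one and choose `l` with `ρ_l x_r ≠ 0`: the largest first entry `i₁` of `L`, or `i₁'`
when `i₁ = i < i₁'`. Since `ẽ_l x = 0`, the minimum of `σ^j_l - τ^j_l` is first attained at
`j = 1` (in type `A` a strict descent from `j` to `j + 1` means that `x_{j+1}` satisfies (c),
and `ẽ_l` would act there), so `ρ_l x_1 = 0` and `σ^j_l - τ^j_l ≥ 0` for all `j`. Hence `r > 1`,
and since `x_r` counts in `τ^{r+1}_l`, some earlier, empty, component `∅_j` satisfies (a), which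
forces `j = l`. The superscripts increase along `x`, so `l ≤ i`, hence `l = i₁`, and condition (2)
for the pair `(x_{r-1}, x_r)` gives `l ≤ (superscript of x_{r-1}) < i_s ≤ i₁ = l`.
-/

namespace List

variable {α : Type*} [LinearOrder α]

theorem foldr_min_le_of_mem_cons {b x : α} {L : List α} (hx : x ∈ b :: L) :
    L.foldr min b ≤ x := by
  induction L with
  | nil => simp_all
  | cons y ys ih =>
    rcases mem_cons.1 hx with rfl | hx
    · exact (min_le_right _ _).trans (ih mem_cons_self)
    rcases mem_cons.1 hx with rfl | hx
    · exact min_le_left _ _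
    · exact (min_le_right _ _).trans (ih (mem_cons_of_mem _ hx))

theorem foldr_min_mem_cons (b : α) (L : List α) : L.foldr min b ∈ b :: L := by
  induction L with
  | nil => exact mem_cons_self
  | cons y ys ih =>
    rw [foldr_cons]
    rcases min_choice y (ys.foldr min b) with h | h <;> rw [h]
    · exact mem_cons_of_mem _ mem_cons_self
    · rcases mem_cons.1 ih with h' | h'
      · rw [h']; exact mem_cons_self
      · exact mem_cons_of_mem _ (mem_cons_of_mem _ h')

end List

namespace CrystalSeq

variable {t : Bool} {n : ℕ} {l : ℤ} {x : RSeq}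

theorem minStat_le_dstat {j : ℕ} (h1 : 1 ≤ j) (h2 : j ≤ x.length) :
    minStat t n l x ≤ dstat t n l x j := by
  obtain ⟨j, rfl⟩ : ∃ j', j = j' + 1 := ⟨j - 1, by omega⟩
  exact List.foldr_min_le_of_mem_cons
    (List.mem_cons_of_mem _ (List.mem_map.2 ⟨j, List.mem_range.2 h2, rfl⟩))

theorem exists_dstat_eq_minStat (hx : x ≠ []) :
    ∃ j, 1 ≤ j ∧ j ≤ x.length ∧ dstat t n l x j = minStat t n l x := by
  have hlen := List.length_pos_iff.2 hx
  rcases List.mem_cons.1 (List.foldr_min_mem_cons (dstat t n l x 1)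
      ((List.range x.length).map fun j => dstat t n l x (j + 1))) with h | h
  · exact ⟨1, le_rfl, hlen, h.symm⟩
  · obtain ⟨j, hj, heq⟩ := List.mem_map.1 h
    exact ⟨j + 1, by omega, List.mem_range.1 hj, heq⟩

theorem dstat_one : dstat t n l x 1 = 0 := by
  simp [dstat, sigmaStat, tauStat]

theorem epos_spec (hx : x ≠ []) :
    1 ≤ epos t n l x ∧ epos t n l x ≤ x.length ∧
      dstat t n l x (epos t n l x) = minStat t n l x :=
  Nat.sInf_mem (exists_dstat_eq_minStat hx)

theorem minStat_lt_dstat_of_lt_epos {j : ℕ} (h1 : 1 ≤ j) (hj : j < epos t n l x)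
    (hjc : j ≤ x.length) : minStat t n l x < dstat t n l x j :=
  (minStat_le_dstat h1 hjc).lt_of_ne fun h => Nat.notMem_of_lt_sInf hj ⟨h1, hjc, h.symm⟩

theorem not_condC_of_etil_eq_none (he : etil t n l x = none)
    (hr : epos t n l x - 1 < x.length) :
    ¬ condC t n x[epos t n l x - 1].1 l x[epos t n l x - 1].2 := by
  intro hC
  simp [etil, List.getElem?_eq_getElem hr, rho, if_pos hC] at he

theorem sigmaStat_le_succ (j : ℕ) : sigmaStat t n l x j ≤ sigmaStat t n l x (j + 1) := by
  have hs := List.take_sublist_take_left (l := x) (show j - 1 ≤ j + 1 - 1 by omega)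
  exact Nat.add_le_add hs.countP_le hs.countP_le

theorem sigmaStat_false (j : ℕ) :
    sigmaStat false n l x j =
      (x.take (j - 1)).countP fun q => decide (condA false n q.1 l q.2) := by
  simp [sigmaStat, condB, condA']

theorem tauStat_false (j : ℕ) :
    tauStat false n l x j =
      ((x.take j).drop 1).countP fun q => decide (condC false n q.1 l q.2) := by
  simp [tauStat, condD, condD']

theorem tauStat_false_succ {j : ℕ} (h1 : 1 ≤ j) (h2 : j < x.length) :
    tauStat false n l x (j + 1) =
      tauStat false n l x j + if condC false n x[j].1 l x[j].2 then 1 else 0 := by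
  rw [tauStat_false, tauStat_false, List.take_add_one, List.getElem?_eq_getElem h2,
    List.drop_append_of_le_length (by simp; omega), List.countP_append]
  simp

theorem condC_of_dstat_succ_lt {j : ℕ} (h1 : 1 ≤ j) (h2 : j < x.length)
    (hlt : dstat false n l x (j + 1) < dstat false n l x j) :
    condC false n x[j].1 l x[j].2 := by
  by_contra hC
  have hσ := sigmaStat_le_succ (t := false) (n := n) (l := l) (x := x) j
  have hτ := tauStat_false_succ (n := n) (l := l) h1 h2
  rw [if_neg hC] at hτ
  unfold dstat at hlt
  omega

theorem epos_eq_one_of_etil_eq_none (hx : x ≠ []) (he : etil false n l x = none) :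
    epos false n l x = 1 := by
  obtain ⟨h1, h2, hmin⟩ := epos_spec (t := false) (n := n) (l := l) hx
  by_contra hne
  have hdesc : dstat false n l x (epos false n l x - 1 + 1) <
      dstat false n l x (epos false n l x - 1) := by
    rw [Nat.sub_add_cancel h1, hmin]
    exact minStat_lt_dstat_of_lt_epos (by omega) (by omega) (by omega)
  exact not_condC_of_etil_eq_none he (by omega)
    (condC_of_dstat_succ_lt (by omega) (by omega) hdesc)

theorem dstat_nonneg_of_etil_eq_none (hx : x ≠ []) (he : etil false n l x = none) {j : ℕ}
    (h1 : 1 ≤ j) (h2 : j ≤ x.length) : 0 ≤ dstat false n l x j := by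
  have hmin := (epos_spec (t := false) (n := n) (l := l) hx).2.2
  rw [epos_eq_one_of_etil_eq_none hx he, dstat_one] at hmin
  exact hmin ▸ minStat_le_dstat h1 h2

theorem exists_condA_lt_of_condC (he : etil false n l x = none) {r : ℕ} (hr : r < x.length)
    (hC : condC false n x[r].1 l x[r].2) : ∃ s, ∃ hs : s < r, condA false n x[s].1 l x[s].2 := by
  have hx : x ≠ [] := List.ne_nil_of_length_pos (by omega)
  rcases Nat.eq_zero_or_pos r with rfl | hr0
  · have h1 := epos_eq_one_of_etil_eq_none hx he
    have hC' := not_condC_of_etil_eq_none he (by omega)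
    simp only [h1] at hC'
    exact absurd hC hC'
  have hd := dstat_nonneg_of_etil_eq_none hx he (j := r + 1) (by omega) hr
  have hτ := tauStat_false_succ (n := n) (l := l) hr0 hr
  rw [if_pos hC] at hτ
  have hσ : 0 < (x.take r).countP fun q => decide (condA false n q.1 l q.2) := by
    have := sigmaStat_false (n := n) (l := l) (x := x) (r + 1)
    rw [Nat.add_sub_cancel] at this
    unfold dstat at hd
    omega
  obtain ⟨q, hq, hqA⟩ := List.countP_pos_iff.1 hσ
  obtain ⟨s, hs, rfl⟩ := List.mem_take_iff_getElem.1 hq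
  exact ⟨s, by omega, of_decide_eq_true hqA⟩

theorem eq_of_condA_nil {i : ℤ} (h : condA t n i l []) : l = i := by
  obtain ⟨-, -, hlt, hgt, -⟩ := h
  simp only [firsts, seconds, List.map_nil, List.not_mem_nil, imp_false, not_lt] at hlt hgt
  omega

theorem InR.fst_le_and_head_snd_le {i a b : ℤ} {tl : List (ℤ × ℤ)} (h : InR t n i ((a, b) :: tl)) :
    ∀ p ∈ (a, b) :: tl, p.1 ≤ a ∧ b ≤ p.2 := by
  have : IsTrans (ℤ × ℤ) fun p q => q.1 < p.1 ∧ p.2 < q.2 :=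
    ⟨fun _ _ _ h₁ h₂ => ⟨h₂.1.trans h₁.1, h₁.2.trans h₂.2⟩⟩
  intro p hp
  rcases List.mem_cons.1 hp with rfl | hp
  · exact ⟨le_rfl, le_rfl⟩
  · have := List.rel_of_pairwise_cons (List.isChain_iff_pairwise.1 h.1) hp
    omega

theorem exists_condC_of_InR {i a b : ℤ} {tl : List (ℤ × ℤ)} (h : InR false n i ((a, b) :: tl)) :
    ∃ l : ℤ, 1 ≤ l ∧ l ≤ n ∧ condC false n i l ((a, b) :: tl) ∧ (l = a ∨ i < l) := by
  have hle := h.fst_le_and_head_snd_le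
  obtain ⟨ha1, hai, hib, hbn, -⟩ := h.2 (a, b) List.mem_cons_self
  simp only [Bool.false_eq_true, if_false] at hbn
  simp only [condC, firsts, seconds, List.map_cons, List.mem_cons, List.mem_map, List.head?_cons,
    Option.some.injEq, Bool.false_eq_true, false_imp_iff, and_true]
  rcases hai.lt_or_eq with hai | hai
  · refine ⟨a, ha1, by omega, ⟨Or.inl (Or.inl rfl), fun _ => ?_, by omega, by omega⟩, Or.inl rfl⟩
    rintro (h' | ⟨p, hp, h'⟩)
    · omega
    · have := hle p (List.mem_cons_of_mem _ hp); omega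
  rcases hib.lt_or_eq with hib | hib
  · refine ⟨b, by omega, hbn, ⟨Or.inr (Or.inl rfl), by omega, fun _ => ?_, by omega⟩, Or.inr hib⟩
    rintro (h' | ⟨p, hp, h'⟩)
    · omega
    · have := hle p (List.mem_cons_of_mem _ hp); omega
  · have hba : b = a := by simp only at hai hib; omega
    exact ⟨a, ha1, by omega, ⟨Or.inl (Or.inl rfl), by omega, by omega, fun _ => by rw [hba]⟩,
      Or.inl rfl⟩

theorem fst_getElem_le_of_le (hsort : (x.map Prod.fst).Pairwise (· ≤ ·)) {s r : ℕ} (hsr : s ≤ r)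
    (hr : r < x.length) : x[s].1 ≤ x[r].1 := by
  simpa using hsort.rel_get_of_le (a := ⟨s, by simp; omega⟩) (b := ⟨r, by simpa⟩) hsr

theorem snd_eq_nil_of_forall_etil_eq_none (hsort : (x.map Prod.fst).Pairwise (· ≤ ·))
    (hval : ValidR false n x) (hchain : x.IsChain fun a b => pairOkA a.1 a.2 b.1 b.2)
    (hw : ∀ l : ℤ, 1 ≤ l → l ≤ n → etil false n l x = none) : ∀ q ∈ x, q.2 = [] := by
  suffices h : ∀ r (hr : r < x.length), x[r].2 = [] by
    intro q hq
    obtain ⟨r, hr, rfl⟩ := List.mem_iff_getElem.1 hq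
    exact h r hr
  intro r
  induction r using Nat.strong_induction_on with
  | _ r ih =>
  intro hr
  obtain ⟨-, -, hR⟩ := hval _ (List.getElem_mem hr)
  rcases hxr : x[r].2 with _ | ⟨⟨a, b⟩, tl⟩
  · rfl
  rw [hxr] at hR
  obtain ⟨l, hl1, hln, hC, hl⟩ := exists_condC_of_InR hR
  obtain ⟨s, hs, hA⟩ := exists_condA_lt_of_condC (hw l hl1 hln) hr (hxr ▸ hC)
  rw [ih s hs (by omega)] at hA
  have hls : l = x[s].1 := eq_of_condA_nil hA
  have hla : l = a := hl.resolve_right (not_lt.2 (hls ▸ fst_getElem_le_of_le hsort hs.le hr))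
  obtain ⟨r, rfl⟩ : ∃ r', r = r' + 1 := ⟨r - 1, by omega⟩
  have hne := List.cons_ne_nil (a, b) tl
  have hlt_last : x[r].1 < (((a, b) :: tl).getLast hne).1 :=
    (List.isChain_iff_getElem.1 hchain r hr).2 (ih r (by omega) (by omega)) _
      (by rw [hxr]; exact List.getLast?_eq_some_getLast hne)
  have hlast_le := hR.fst_le_and_head_snd_le _ (List.getLast_mem hne)
  have hsr := fst_getElem_le_of_le hsort (by omega : s ≤ r) (by omega)
  omega

theorem typeList_pairwise (n : ℕ) (m : ℤ → ℕ) : (typeList n m).Pairwise (· ≤ ·) := by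
  simp only [typeList, List.pairwise_flatMap, List.pure_def, List.bind_eq_flatMap,
    ← List.map_eq_flatMap, List.pairwise_map]
  refine ⟨fun a _ => List.pairwise_replicate.2 (Or.inr le_rfl), List.pairwise_lt_range.imp ?_⟩
  intro a b hab y hy z hz
  rw [List.eq_of_mem_replicate hy, List.eq_of_mem_replicate hz]
  omega

theorem eq_map_of_forall_snd_eq_nil (h : ∀ q ∈ x, q.2 = []) :
    x = (x.map Prod.fst).map fun i => (i, []) := by
  rw [List.map_map]
  exact (List.map_id' x).symm.trans (List.map_congr_left fun q hq => Prod.ext rfl (h q hq))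

end CrystalSeq

open CrystalSeq in
theorem statement12_general (n : ℕ) (m : ℤ → ℕ) (c : RSeq)
    (h : MemA n m c)
    (hw : ∀ l : ℤ, 1 ≤ l → l ≤ (n : ℤ) → etil false n l c = none) :
    c = rlam n m := by
  obtain ⟨hmap, hval, hchain⟩ := h
  have hsort : (c.map Prod.fst).Pairwise (· ≤ ·) := hmap ▸ typeList_pairwise n m
  rw [rlam, ← hmap]
  exact eq_map_of_forall_snd_eq_nil (snd_eq_nil_of_forall_etil_eq_none hsort hval hchain hw)

open CrystalSeq in
/-- uniqueness of the highest weight element in type `A`: if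
`x = (x₁, …, x_k, 0, …) ∈ 𝓡(λ)` (characterised by conditions (1) i)–iii) and (2) of
Theorem `char`) satisfies `ẽ_l x = 0` for all `l ∈ I`, then `x = r_λ`. -/
theorem statement12 (n : ℕ) (hn : 1 ≤ n) (m : ℤ → ℕ) (c : RSeq)
    (h : MemA n m c)
    (hw : ∀ l : ℤ, 1 ≤ l → l ≤ (n : ℤ) → etil false n l c = none) :
    c = rlam n m :=
  statement12_general n m c h hw
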